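/- If G is a friendly-edge-colorable graph, then every proper edge coloring of G using exactly χ'(G) colors has all color classes equal to maximum matchings of G (each of size ν(G)). -/

import Mathlib

open scoped Classical

/-- `M` is a matching of `G`, given as a finite set of edges. -/
def IsMatchingFinset {V : Type*} (G : SimpleGraph V) (M : Finset (Sym2 V)) : Prop :=
  (M : Set (Sym2 V)) ⊆ G.edgeSet ∧
    ∀ e ∈ M, ∀ f ∈ M, e ≠ f → ∀ v : V, ¬(v ∈ e ∧ v ∈ f)

/-- ν(G): the maximum size of a matching of `G`. -/
noncomputable def matchingNumber {V : Type*} (G : SimpleGraph V) : ℕ :=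
  sSup {n | ∃ M : Finset (Sym2 V), IsMatchingFinset G M ∧ M.card = n}

/-- A proper edge coloring of `G` using colors `< n`. -/
def IsProperEdgeColoring {V : Type*} (G : SimpleGraph V) (n : ℕ) (c : Sym2 V → ℕ) : Prop :=
  (∀ e ∈ G.edgeSet, c e < n) ∧
    ∀ e ∈ G.edgeSet, ∀ f ∈ G.edgeSet, e ≠ f → (∃ v : V, v ∈ e ∧ v ∈ f) → c e ≠ c f

/-- χ'(G): the edge chromatic index of `G`. -/
noncomputable def chromaticIndex {V : Type*} (G : SimpleGraph V) : ℕ :=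
  sInf {n | ∃ c : Sym2 V → ℕ, IsProperEdgeColoring G n c}

/-- `G` is friendly-edge-colorable: its edge set is partitioned into maximum matchings. -/
noncomputable def Friendly {V : Type*} [Fintype V] (G : SimpleGraph V) : Prop :=
  ∃ P : Finset (Finset (Sym2 V)),
    (∀ M ∈ P, IsMatchingFinset G M ∧ M.card = matchingNumber G) ∧
    (∀ e, e ∈ G.edgeFinset ↔ ∃ M ∈ P, e ∈ M) ∧
    ∀ M ∈ P, ∀ N ∈ P, M ≠ N → Disjoint M N

/-- The graph `G` with vertex `x` deleted. -/
def delVert {V : Type*} (G : SimpleGraph V) (x : V) : SimpleGraph {v : V // v ≠ x} :=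
  G.induce {v : V | v ≠ x}

/-- `G` has a perfect matching. -/
def HasPerfectMatchingFinset {V : Type*} (G : SimpleGraph V) : Prop :=
  ∃ M : Finset (Sym2 V), IsMatchingFinset G M ∧ ∀ v : V, ∃ e ∈ M, v ∈ e

/-- `G` is factor-critical. -/
def FactorCritical {V : Type*} (G : SimpleGraph V) : Prop :=
  G.Connected ∧ ∀ x : V, HasPerfectMatchingFinset (delVert G x)

/-! A friendly partition into `p` maximum matchings is itself an edge coloring with `p` colors,
so `χ' ≤ p` and `χ' ν ≤ p ν = |E|`. The color classes of a `χ'`-coloring are `χ'` matchings, each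
of size at most `ν`, whose sizes add up to `|E| ≥ χ' ν`; hence each has size exactly `ν`. -/

open Finset

noncomputable def colorClass {V : Type*} [Fintype V] (G : SimpleGraph V) (c : Sym2 V → ℕ) (i : ℕ) :
    Finset (Sym2 V) :=
  G.edgeFinset.filter (fun e => c e = i)

section

variable {V : Type*} {G : SimpleGraph V}

theorem chromaticIndex_le_card_of_cover (P : Finset (Finset (Sym2 V)))
    (hP : ∀ M ∈ P, IsMatchingFinset G M) (hcover : ∀ e ∈ G.edgeSet, ∃ M ∈ P, e ∈ M) :
    chromaticIndex G ≤ #P := by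
  choose! m hm using hcover
  refine Nat.sInf_le ⟨fun e => P.toList.idxOf (m e), fun e he => ?_, ?_⟩
  · rw [← length_toList]
    exact List.idxOf_lt_length_of_mem (mem_toList.2 (hm e he).1)
  · intro e he f hf hef ⟨v, hv⟩ hcol
    have hmf : m e = m f := (List.idxOf_inj (mem_toList.2 (hm e he).1)).1 hcol
    exact (hP _ (hm e he).1).2 e (hm e he).2 f (hmf ▸ (hm f hf).2) hef v hv

variable [Fintype V]

theorem IsMatchingFinset.card_le_matchingNumber {M : Finset (Sym2 V)} (hM : IsMatchingFinset G M) :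
    #M ≤ matchingNumber G := by
  refine le_csSup ⟨#G.edgeFinset, ?_⟩ ⟨M, hM, rfl⟩
  rintro n ⟨N, hN, rfl⟩
  exact card_le_card fun e he => SimpleGraph.mem_edgeFinset.2 (hN.1 he)

theorem IsProperEdgeColoring.isMatchingFinset_colorClass {n : ℕ} {c : Sym2 V → ℕ}
    (hc : IsProperEdgeColoring G n c) (i : ℕ) : IsMatchingFinset G (colorClass G c i) := by
  simp only [IsMatchingFinset, colorClass, coe_filter, mem_filter, SimpleGraph.mem_edgeFinset]
  refine ⟨fun e he => he.1, ?_⟩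
  rintro e ⟨he, rfl⟩ f ⟨hf, hcf⟩ hef v hv
  exact hc.2 e he f hf hef ⟨v, hv⟩ hcf.symm

theorem IsProperEdgeColoring.sum_card_colorClass {n : ℕ} {c : Sym2 V → ℕ}
    (hc : IsProperEdgeColoring G n c) :
    ∑ i ∈ range n, #(colorClass G c i) = #G.edgeFinset :=
  (card_eq_sum_card_fiberwise fun e he =>
    mem_range.2 (hc.1 e (SimpleGraph.mem_edgeFinset.1 he))).symm

theorem Friendly.chromaticIndex_mul_matchingNumber_le (hG : Friendly G) :
    chromaticIndex G * matchingNumber G ≤ #G.edgeFinset := by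
  obtain ⟨P, hPmax, hPcover, hPdisj⟩ := hG
  have hunion : P.biUnion id = G.edgeFinset := by
    ext e
    simpa using (hPcover e).symm
  have hcard : #G.edgeFinset = #P * matchingNumber G := by
    rw [← hunion, card_biUnion (t := id) fun M hM N hN hMN => hPdisj M hM N hN hMN]
    exact sum_const_nat fun M hM => (hPmax M hM).2
  rw [hcard]
  refine Nat.mul_le_mul_right _ (chromaticIndex_le_card_of_cover P (fun M hM => (hPmax M hM).1) ?_)
  exact fun e he => (hPcover e).1 (SimpleGraph.mem_edgeFinset.2 he)

end

theorem stmt_10 {V : Type*} [Fintype V] (G : SimpleGraph V) (hG : Friendly G)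
    (c : Sym2 V → ℕ) (hc : IsProperEdgeColoring G (chromaticIndex G) c) :
    ∀ i < chromaticIndex G,
      IsMatchingFinset G (G.edgeFinset.filter (fun e => c e = i)) ∧
      (G.edgeFinset.filter (fun e => c e = i)).card = matchingNumber G := by
  have hle : ∀ i ∈ range (chromaticIndex G), #(colorClass G c i) ≤ matchingNumber G :=
    fun i _ => (hc.isMatchingFinset_colorClass i).card_le_matchingNumber
  have hsum : ∑ i ∈ range (chromaticIndex G), #(colorClass G c i) =
      ∑ _i ∈ range (chromaticIndex G), matchingNumber G := by
    refine le_antisymm (sum_le_sum hle) ?_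
    rw [sum_const, card_range, smul_eq_mul, hc.sum_card_colorClass]
    exact hG.chromaticIndex_mul_matchingNumber_le
  intro i hi
  exact ⟨hc.isMatchingFinset_colorClass i,
    (sum_eq_sum_iff_of_le hle).1 hsum i (mem_range.2 hi)⟩
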